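/- Every bilinear lattice $(V,f)$ has an integral Wu class, i.e. there exists $v\in V$ such that $f(x,x) - f(x,v)\in 2\mathbb Z$ for all $x\in V$. -/

import Mathlib

/-!
Reducing modulo 2, the diagonal `x ↦ f x x` of a symmetric form becomes additive, since the
cross terms `2 f x y` vanish. Over `𝔽₂` it is therefore a linear functional vanishing on the
radical of the reduced form, hence of the shape `x ↦ f x c` for some `c` (the range of the dual
map is the annihilator of the kernel); any integral lift `v` of `c` is an integral Wu class.
-/

namespace LinearMap.BilinForm

section CharTwo

variable {R M S : Type*} [CommRing R] [AddCommGroup M] [Module R M] [CommRing S] [CharP S 2]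

def diagCharTwo (B : LinearMap.BilinForm R M) (hB : B.IsSymm) (φ : R →+* S) : M →+ S where
  toFun x := φ (B x x)
  map_zero' := by simp
  map_add' x y := by
    simp only [map_add, LinearMap.add_apply, hB.eq y x]
    linear_combination CharTwo.add_self_eq_zero (φ (B x y))

@[simp]
theorem diagCharTwo_apply (B : LinearMap.BilinForm R M) (hB : B.IsSymm) (φ : R →+* S) (x : M) :
    B.diagCharTwo hB φ x = φ (B x x) :=
  rfl

end CharTwo

theorem exists_forall_apply_self_eq_apply {W : Type*} [AddCommGroup W] [Module (ZMod 2) W]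
    [FiniteDimensional (ZMod 2) W] (B : LinearMap.BilinForm (ZMod 2) W) (hB : B.IsSymm) :
    ∃ c, ∀ x, B x x = B x c := by
  let q : Module.Dual (ZMod 2) W := (B.diagCharTwo hB (RingHom.id _)).toZModLinearMap 2
  have hq : q ∈ (LinearMap.ker B).dualAnnihilator := by
    rw [Submodule.mem_dualAnnihilator]
    intro x hx
    simp [q, LinearMap.mem_ker.mp hx]
  rw [← LinearMap.range_dualMap_eq_dualAnnihilator_ker] at hq
  obtain ⟨φ, hφ⟩ := hq
  obtain ⟨c, rfl⟩ := (Module.evalEquiv (ZMod 2) W).surjective φ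
  exact ⟨c, fun x => (LinearMap.congr_fun hφ x).symm⟩

end LinearMap.BilinForm

open Matrix in
theorem Matrix.IsSymm.exists_mulVec_eq_diag {ι : Type*} [Fintype ι] [DecidableEq ι]
    {A : Matrix ι ι (ZMod 2)} (hA : A.IsSymm) : ∃ c, A *ᵥ c = A.diag := by
  obtain ⟨c, hc⟩ := LinearMap.BilinForm.exists_forall_apply_self_eq_apply A.toBilin'
    (isSymm_toBilin'_iff_isSymm.mpr hA)
  refine ⟨c, funext fun i => ?_⟩
  have hi := hc (Pi.single i 1)
  rw [toBilin'_single, toBilin'_apply', single_one_dotProduct] at hi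
  exact hi.symm

theorem LinearMap.BilinForm.IsSymm.exists_forall_intCast_apply_self_eq
    {V ι : Type*} [AddCommGroup V] [Finite ι] (b : Module.Basis ι ℤ V)
    {f : LinearMap.BilinForm ℤ V} (hf : f.IsSymm) :
    ∃ v, ∀ x, ((f x x : ℤ) : ZMod 2) = f x v := by
  classical
  have := Fintype.ofFinite ι
  obtain ⟨c, hc⟩ :=
    (((isSymm_toMatrix_iff_isSymm b).mpr hf).map (Int.cast : ℤ → ZMod 2)).exists_mulVec_eq_diag
  let v := ∑ j, ((c j).cast : ℤ) • b j
  refine ⟨v, fun x => ?_⟩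
  suffices f.diagCharTwo hf (Int.castRingHom _) =
      (Int.castAddHom (ZMod 2)).comp (f.flip v).toAddMonoidHom from
    DFunLike.congr_fun this x
  apply AddMonoidHom.toIntLinearMap_injective
  refine b.ext fun i => ?_
  have hi := congrFun hc i
  simp only [Matrix.mulVec, dotProduct, Matrix.map_apply, toMatrix_apply, Matrix.diag_apply] at hi
  have hfv : f (b i) v = ∑ j, f (b i) (b j) * (c j).cast := by
    simp only [v, map_sum, map_zsmul, smul_eq_mul, mul_comm]
  simp [hfv, ← hi]

theorem stmt_5_general {V : Type*} [AddCommGroup V] [Module.Free ℤ V] [Module.Finite ℤ V]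
    (f : V →ₗ[ℤ] V →ₗ[ℤ] ℤ)
    (hsymm : ∀ x y : V, f x y = f y x) :
    ∃ v : V, ∀ x : V, (2 : ℤ) ∣ (f x x - f x v) := by
  obtain ⟨v, hv⟩ := LinearMap.BilinForm.IsSymm.exists_forall_intCast_apply_self_eq
    (Module.Free.chooseBasis ℤ V) (f := f) ⟨hsymm⟩
  exact ⟨v, fun x =>
    (ZMod.intCast_zmod_eq_zero_iff_dvd _ 2).mp (by rw [Int.cast_sub, hv, sub_self])⟩

/-- every bilinear lattice `(V,f)` (a finitely generated free abelian group with
a symmetric nondegenerate bilinear form `f : V × V → ℤ`) has an integral Wu class, i.e.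
there is `v ∈ V` with `f(x,x) - f(x,v) ∈ 2ℤ` for all `x ∈ V`. -/
theorem stmt_5 {V : Type*} [AddCommGroup V] [Module.Free ℤ V] [Module.Finite ℤ V]
    (f : V →ₗ[ℤ] V →ₗ[ℤ] ℤ)
    (hsymm : ∀ x y : V, f x y = f y x)
    (hnd : ∀ x : V, (∀ y : V, f x y = 0) → x = 0) :
    ∃ v : V, ∀ x : V, (2 : ℤ) ∣ (f x x - f x v) :=
  stmt_5_general f hsymm
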